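/- arXiv:2204.10119 — 3 statements merged into one kernel-verified Lean document; each statement's English description precedes it below -/
import Mathlib

section
/- Let G be a minimal candidate with bipartition (A,B), and let X ⊆ A or X ⊆ B with |X| = 4. Then there do not exist five pairwise vertex-disjoint connected subgraphs Y_1,…,Y_5 of G\X such that every vertex of X has a neighbour in each Y_i. -/
open SimpleGraph Function

/-- `G` has a `K_t` minor: there are `t` nonempty, pairwise disjoint "branch sets",
each inducing a connected subgraph, with an edge of `G` between any two of them.
(This is the "`t`-cluster" formulation, equivalent to `K_t` being obtainable from a
subgraph of `G` by contracting edges.) -/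
def HasCliqueMinor {V : Type*} (G : SimpleGraph V) (t : ℕ) : Prop :=
  ∃ f : Fin t → Set V,
    (∀ i, (f i).Nonempty) ∧
    (∀ i, (G.induce (f i)).Connected) ∧
    (Pairwise fun i j => Disjoint (f i) (f j)) ∧
    ∀ i j, i ≠ j → ∃ u ∈ f i, ∃ v ∈ f j, G.Adj u v

/-- `(A, B)` is a bipartition of `G`: the parts partition the vertex set and
every edge joins `A` to `B`. -/
def IsBipartitionWith {V : Type*} (G : SimpleGraph V) (A B : Set V) : Prop :=
  (∀ v, v ∈ A ∨ v ∈ B) ∧ (∀ v, ¬(v ∈ A ∧ v ∈ B)) ∧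
    ∀ ⦃u v⦄, G.Adj u v → (u ∈ A ↔ v ∈ B)

/-- A candidate: a graph with a bipartition `(A,B)`, `|A| ≥ |B| > 0`, every vertex
of `A` of degree at least six, and no `K_6` minor. -/
def IsCandidate {V : Type*} (G : SimpleGraph V) (A B : Set V) : Prop :=
  IsBipartitionWith G A B ∧ B.ncard ≤ A.ncard ∧ B.Nonempty ∧
    (∀ a ∈ A, 6 ≤ (G.neighborSet a).ncard) ∧ ¬ HasCliqueMinor G 6

/-- A minimal candidate: a candidate minimizing `|V(G)| + |E(G)|` among all
(finite) candidates. -/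
def IsMinimalCandidate {V : Type*} [Fintype V] (G : SimpleGraph V) (A B : Set V) : Prop :=
  IsCandidate G A B ∧
    ∀ (n : ℕ) (G' : SimpleGraph (Fin n)) (A' B' : Set (Fin n)),
      IsCandidate G' A' B' →
        Fintype.card V + G.edgeSet.ncard ≤ n + G'.edgeSet.ncard

/-!
Suppose `Y₀, …, Y₄` exist. Grow each `Yᵢ` to its component `Pᵢ` in `G - X - ⋃_{j ≠ i} Yⱼ`.
If some `Pᵢ` touches some `Yⱼ`, then `Pᵢ`, `Yⱼ`, the remaining three `Yₖ` each joined with a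
vertex of `X`, and the fourth vertex of `X` are the branch sets of a `K₆` minor.
Otherwise the `Pᵢ` are five disjoint unions of components of `G - X`.

Minimality enters only through one inequality: a proper vertex set `S` that contains the
neighbourhoods of its `A`-vertices and meets `B` has `|A ∩ S| < |B ∩ S|`, since otherwise
`G[S]` would be a smaller candidate. If `X ⊆ A`, apply it to each `Pᵢ` and (weakly) to
the rest of `G - X`; summing gives `|A| ≤ |B| + |X| - 5 < |B|`. If `X ⊆ B`, apply it to the
complement of each `Pᵢ`, which gives `|B ∩ Pᵢ| < |A ∩ Pᵢ|`, and to `X` together with four of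
the `Pᵢ`, which then cannot have fewer `A`- than `B`-vertices.
-/

namespace SimpleGraph

variable {V W : Type*}

theorem Connected.induce_image {G : SimpleGraph V} {H : SimpleGraph W} (f : G ↪g H)
    {s : Set V} (hs : (G.induce s).Connected) : (H.induce (f '' s)).Connected :=
  let φ : G.induce s →g H.induce (f '' s) :=
    ⟨fun v => ⟨f v, v, v.2, rfl⟩, fun h => f.map_adj_iff.mpr h⟩
  hs.map φ (by rintro ⟨_, v, hv, rfl⟩; exact ⟨⟨v, hv⟩, rfl⟩)

theorem ncard_edgeSet_comap_le [Finite V] (G : SimpleGraph V) (f : W ↪ V) :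
    (G.comap f).edgeSet.ncard ≤ G.edgeSet.ncard :=
  Nat.card_le_card_of_injective _ (Embedding.comap f G).mapEdgeSet.injective

end SimpleGraph

open SimpleGraph

section Candidates

variable {V W : Type*}

theorem HasCliqueMinor.map {G : SimpleGraph V} {H : SimpleGraph W} (f : G ↪g H) {t : ℕ}
    (h : HasCliqueMinor G t) : HasCliqueMinor H t := by
  obtain ⟨Y, hne, hconn, hdisj, hadj⟩ := h
  refine ⟨fun i => f '' Y i, fun i => (hne i).image f, fun i => (hconn i).induce_image f,
    fun i j hij => (Set.disjoint_image_iff f.injective).mpr (hdisj hij), fun i j hij => ?_⟩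
  obtain ⟨u, hu, v, hv, huv⟩ := hadj i j hij
  exact ⟨f u, Set.mem_image_of_mem f hu, f v, Set.mem_image_of_mem f hv, f.map_adj_iff.mpr huv⟩

theorem IsCandidate.comap {G : SimpleGraph V} {A B : Set V} (hG : IsCandidate G A B)
    (f : W ↪ V) (hclosed : ∀ a ∈ A ∩ Set.range f, G.neighborSet a ⊆ Set.range f)
    (hB : (B ∩ Set.range f).Nonempty)
    (hcard : (B ∩ Set.range f).ncard ≤ (A ∩ Set.range f).ncard) :
    IsCandidate (G.comap f) (f ⁻¹' A) (f ⁻¹' B) := by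
  obtain ⟨⟨hcover, hdisj, hedge⟩, -, -, hdeg, hK6⟩ := hG
  have hpre : ∀ C : Set V, (f ⁻¹' C).ncard = (C ∩ Set.range f).ncard := fun C => by
    rw [← Set.ncard_preimage_of_injective_subset_range f.injective Set.inter_subset_right,
      Set.preimage_inter_range]
  refine ⟨⟨fun w => hcover (f w), fun w => hdisj (f w), fun _ _ h => hedge h⟩, ?_, ?_, ?_, ?_⟩
  · rwa [hpre, hpre]
  · obtain ⟨_, hb, w, rfl⟩ := hB
    exact ⟨w, hb⟩
  · intro w hw
    have hN : (G.comap f).neighborSet w = f ⁻¹' G.neighborSet (f w) := rfl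
    rw [hN, Set.ncard_preimage_of_injective_subset_range f.injective
      (hclosed _ ⟨hw, w, rfl⟩)]
    exact hdeg _ hw
  · exact fun h => hK6 (h.map (Embedding.comap f G))

variable [Fintype V] {G : SimpleGraph V} {A B : Set V}

theorem IsMinimalCandidate.ncard_inter_lt (hmin : IsMinimalCandidate G A B) {S : Set V}
    (hS : S ≠ Set.univ) (hclosed : ∀ a ∈ A ∩ S, G.neighborSet a ⊆ S)
    (hB : (B ∩ S).Nonempty) : (A ∩ S).ncard < (B ∩ S).ncard := by
  by_contra! hcard
  let f : Fin (Nat.card S) ↪ V := (Finite.equivFin S).symm.toEmbedding.trans (.subtype _)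
  have hf : Set.range f = S := by
    change Set.range (Subtype.val ∘ (Finite.equivFin S).symm) = S
    rw [Set.range_comp, Equiv.range_eq_univ, Set.image_univ, Subtype.range_coe]
  rw [← hf] at hclosed hB hcard
  have hmin' := hmin.2 _ _ _ _ (hmin.1.comap f hclosed hB hcard)
  have hS' : Nat.card S < Fintype.card V := by
    rw [Nat.card_coe_set_eq, ← Nat.card_eq_fintype_card]; exact Set.ncard_lt_card hS
  have := ncard_edgeSet_comap_le G f
  omega

theorem IsMinimalCandidate.ncard_inter_le (hmin : IsMinimalCandidate G A B) {S : Set V}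
    (hS : S ≠ Set.univ) (hclosed : ∀ a ∈ A ∩ S, G.neighborSet a ⊆ S) :
    (A ∩ S).ncard ≤ (B ∩ S).ncard := by
  obtain ⟨⟨-, -, hedge⟩, -, -, hdeg, -⟩ := hmin.1
  rcases (A ∩ S).eq_empty_or_nonempty with hA | ⟨a, ha⟩
  · simp [hA]
  have hdeg_pos : (G.neighborSet a).ncard ≠ 0 := by have := hdeg a ha.1; omega
  obtain ⟨b, hb⟩ := Set.nonempty_of_ncard_ne_zero hdeg_pos
  exact (hmin.ncard_inter_lt hS hclosed ⟨b, (hedge hb).mp ha.1, hclosed a ha hb⟩).le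

end Candidates

section Separation

variable {V : Type*} {G : SimpleGraph V}

/-- `K` is a union of components of `G - X`. -/
def IsSeparatedBy (G : SimpleGraph V) (X K : Set V) : Prop :=
  Disjoint K X ∧ ∀ ⦃u v⦄, u ∈ K → G.Adj u v → v ∈ K ∪ X

theorem IsSeparatedBy.subset_of_connected {X K Z : Set V} (hK : IsSeparatedBy G X K)
    (hZ : (G.induce Z).Connected) (hZX : Disjoint Z X) {z : V} (hzZ : z ∈ Z) (hzK : z ∈ K) :
    Z ⊆ K := by
  intro w hwZ
  by_contra hwK
  obtain ⟨p⟩ := hZ.preconnected ⟨z, hzZ⟩ ⟨w, hwZ⟩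
  obtain ⟨d, -, hd₁, hd₂⟩ := p.exists_boundary_dart {v | v.1 ∈ K} hzK hwK
  exact hd₂ ((hK.2 hd₁ d.adj).resolve_right (Set.disjoint_left.mp hZX d.snd.2))

def SimpleGraph.componentAvoiding (G : SimpleGraph V) (D : Set V) (y : V) : Set V :=
  ⋃₀ {P | Disjoint P D ∧ (G.induce P).Connected ∧ y ∈ P}

variable {D P : Set V} {y : V}

theorem SimpleGraph.subset_componentAvoiding (hP : (G.induce P).Connected)
    (hPD : Disjoint P D) (hy : y ∈ P) : P ⊆ G.componentAvoiding D y :=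
  Set.subset_sUnion_of_mem ⟨hPD, hP, hy⟩

theorem SimpleGraph.disjoint_componentAvoiding : Disjoint (G.componentAvoiding D y) D :=
  Set.disjoint_sUnion_left.mpr fun _ hP => hP.1

theorem SimpleGraph.connected_componentAvoiding (hP : (G.induce P).Connected)
    (hPD : Disjoint P D) (hy : y ∈ P) : (G.induce (G.componentAvoiding D y)).Connected :=
  induce_sUnion_connected_of_pairwise_not_disjoint ⟨P, hPD, hP, hy⟩
    (fun hs ht => ⟨y, hs.2.2, ht.2.2⟩) (fun hs => hs.2.1)

theorem SimpleGraph.isSeparatedBy_componentAvoiding :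
    IsSeparatedBy G D (G.componentAvoiding D y) := by
  refine ⟨disjoint_componentAvoiding, fun u v hu huv => ?_⟩
  obtain ⟨P, ⟨hPD, hP, hyP⟩, huP⟩ := hu
  by_cases hvD : v ∈ D
  · exact Or.inr hvD
  have huD : u ∉ D := Set.disjoint_left.mp hPD huP
  refine Or.inl ⟨P ∪ {u, v}, ⟨?_, ?_, Or.inl hyP⟩, by simp⟩
  · simpa [Set.disjoint_union_left, hPD] using ⟨huD, hvD⟩
  · exact induce_union_connected hP.preconnected (induce_pair_connected_of_adj huv).preconnected
      ⟨u, huP, by simp⟩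

theorem pairwise_disjoint_update {ι : Type*} [DecidableEq ι] {Y : ι → Set V}
    (hY : Pairwise (Disjoint on Y)) {i : ι} {P : Set V} (hP : ∀ j ≠ i, Disjoint P (Y j)) :
    Pairwise (Disjoint on (Function.update Y i P)) := by
  intro k l hkl
  change Disjoint (Function.update Y i P k) (Function.update Y i P l)
  rcases eq_or_ne k i with rfl | hk
  · rw [Function.update_self, Function.update_of_ne hkl.symm]; exact hP l hkl.symm
  rcases eq_or_ne l i with rfl | hl
  · rw [Function.update_self, Function.update_of_ne hk]; exact (hP k hk).symm
  · rw [Function.update_of_ne hk, Function.update_of_ne hl]; exact hY hkl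

theorem exists_adj_enlargement_or_separated {ι : Type*} [DecidableEq ι] {X : Set V}
    {Y : ι → Set V} (hconn : ∀ i, (G.induce (Y i)).Connected)
    (hdisj : Pairwise (Disjoint on Y)) (hYX : ∀ i, Disjoint (Y i) X) :
    (∃ Z : ι → Set V, (∀ i, Y i ⊆ Z i) ∧ (∀ i, (G.induce (Z i)).Connected) ∧
      Pairwise (Disjoint on Z) ∧ (∀ i, Disjoint (Z i) X) ∧
      ∃ i j, i ≠ j ∧ ∃ u ∈ Z i, ∃ v ∈ Z j, G.Adj u v) ∨
    ∃ K : ι → Set V, (∀ i, Y i ⊆ K i) ∧ Pairwise (Disjoint on K) ∧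
      ∀ i, IsSeparatedBy G X (K i) := by
  choose y hy using fun i => Set.nonempty_coe_sort.mp (hconn i).nonempty
  let D : ι → Set V := fun i => X ∪ ⋃ (j) (_ : j ≠ i), Y j
  let P : ι → Set V := fun i => G.componentAvoiding (D i) (y i)
  have hYD : ∀ i, Disjoint (Y i) (D i) := fun i => by
    simpa [D, hYX i] using fun j hji => (hdisj hji).symm
  have hYP : ∀ i, Y i ⊆ P i := fun i => subset_componentAvoiding (hconn i) (hYD i) (hy i)
  have hPconn : ∀ i, (G.induce (P i)).Connected := fun i =>
    connected_componentAvoiding (hconn i) (hYD i) (hy i)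
  have hPD : ∀ i, Disjoint (P i) (D i) := fun i => disjoint_componentAvoiding
  have hPX : ∀ i, Disjoint (P i) X := fun i => (hPD i).mono_right Set.subset_union_left
  have hPY : ∀ i j, j ≠ i → Disjoint (P i) (Y j) := fun i j hji =>
    (hPD i).mono_right (Set.subset_union_of_subset_right (Set.subset_biUnion_of_mem hji) _)
  by_cases hbridge : ∃ i j, i ≠ j ∧ ∃ u ∈ P i, ∃ v ∈ Y j, G.Adj u v
  · obtain ⟨i, j, hij, hadj⟩ := hbridge
    left
    refine ⟨Function.update Y i (P i),
      (Function.forall_update_iff Y fun k s => Y k ⊆ s).2 ⟨hYP i, fun k _ => subset_rfl⟩,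
      (Function.forall_update_iff Y fun _ s => (G.induce s).Connected).2
        ⟨hPconn i, fun k _ => hconn k⟩,
      pairwise_disjoint_update hdisj (hPY i),
      (Function.forall_update_iff Y fun _ s => Disjoint s X).2 ⟨hPX i, fun k _ => hYX k⟩,
      i, j, hij, by simpa [Function.update_of_ne hij.symm] using hadj⟩
  · push Not at hbridge
    have hsep : ∀ i, IsSeparatedBy G X (P i) := fun i => by
      refine ⟨hPX i, fun u v hu huv => ?_⟩
      rcases isSeparatedBy_componentAvoiding.2 hu huv with hv | hv | hv
      · exact Or.inl hv
      · exact Or.inr hv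
      · obtain ⟨j, hji, hvj⟩ := Set.mem_iUnion₂.mp hv
        exact absurd huv (hbridge i j hji.symm u hu v hvj)
    refine Or.inr ⟨P, hYP, fun i j hij => Set.disjoint_left.mpr fun z hzi hzj => ?_, hsep⟩
    have hPji : P j ⊆ P i := (hsep i).subset_of_connected (hPconn j) (hPX j) hzj hzi
    exact Set.disjoint_left.mp (hPY i j hij.symm) (hPji (hYP j (hy j))) (hy j)

end Separation

section Clusters

variable {V : Type*} {G : SimpleGraph V}

/-- `HasCliqueMinor G t` unfolds to `∃ f : Fin t → Set V, IsCluster G f`. -/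
def IsCluster (G : SimpleGraph V) {t : ℕ} (f : Fin t → Set V) : Prop :=
  (∀ i, (f i).Nonempty) ∧ (∀ i, (G.induce (f i)).Connected) ∧
    (Pairwise fun i j => Disjoint (f i) (f j)) ∧ ∀ i j, i ≠ j → ∃ u ∈ f i, ∃ v ∈ f j, G.Adj u v

theorem isCluster_elim0 : IsCluster G (Fin.elim0 : Fin 0 → Set V) :=
  ⟨fun i => i.elim0, fun i => i.elim0, fun i => i.elim0, fun i => i.elim0⟩

theorem IsCluster.cons {t : ℕ} {f : Fin t → Set V} (hf : IsCluster G f) {W : Set V}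
    (hW : (G.induce W).Connected) (hdisj : ∀ i, Disjoint W (f i))
    (hadj : ∀ i, ∃ u ∈ W, ∃ v ∈ f i, G.Adj u v) : IsCluster G (Fin.cons W f) := by
  obtain ⟨hne, hconn, hd, ha⟩ := hf
  refine ⟨Fin.cases (Set.nonempty_coe_sort.mp hW.nonempty) hne, Fin.cases hW hconn, ?_, ?_⟩
  · intro i j hij
    cases i using Fin.cases <;> cases j using Fin.cases
    · exact absurd rfl hij
    · exact hdisj _
    · exact (hdisj _).symm
    · exact hd (fun h => hij (congrArg Fin.succ h))
  · intro i j hij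
    cases i using Fin.cases <;> cases j using Fin.cases
    · exact absurd rfl hij
    · exact hadj _
    · obtain ⟨u, hu, v, hv, huv⟩ := hadj _
      exact ⟨v, hv, u, hu, huv.symm⟩
    · exact ha _ _ (fun h => hij (congrArg Fin.succ h))

end Clusters

theorem Equiv.Perm.exists_apply_eq_and_apply_eq {α : Type*} [DecidableEq α] {a b i j : α}
    (hab : a ≠ b) (hij : i ≠ j) : ∃ σ : Equiv.Perm α, σ a = i ∧ σ b = j := by
  refine ⟨(Equiv.swap b (Equiv.swap a i j)).trans (Equiv.swap a i), ?_, by simp⟩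
  have : Equiv.swap a i j ≠ a := by
    rw [Ne, Equiv.swap_apply_eq_iff, Equiv.swap_apply_left]; exact hij.symm
  simp [Equiv.swap_apply_of_ne_of_ne hab this.symm]

section SixMinor

variable {V : Type*} {G : SimpleGraph V}

theorem hasCliqueMinor_six {X : Set V} (hX : 4 ≤ X.ncard) {Z : Fin 5 → Set V}
    (hconn : ∀ i, (G.induce (Z i)).Connected) (hdisj : Pairwise (Disjoint on Z))
    (hZX : ∀ i, Disjoint (Z i) X) (hatt : ∀ x ∈ X, ∀ i, ∃ z ∈ Z i, G.Adj x z)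
    (h01 : ∃ u ∈ Z 0, ∃ v ∈ Z 1, G.Adj u v) : HasCliqueMinor G 6 := by
  have : Finite X := (Set.finite_of_ncard_pos (by omega)).to_subtype
  let x : Fin 4 ↪ V := (Fin.castLEEmb (by rwa [Nat.card_coe_set_eq])).trans
    ((Finite.equivFin X).symm.toEmbedding.trans (.subtype _))
  have hxX : ∀ k, x k ∈ X := fun k => Subtype.prop _
  have hxZ : ∀ k i, x k ∉ Z i := fun k i h => Set.disjoint_left.mp (hZX i) h (hxX k)
  have hd : ∀ i j, i ≠ j → Disjoint (Z i) (Z j) := fun i j h => hdisj h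
  have hins : ∀ i k, (G.induce (Z i ∪ {x k})).Connected := fun i k => by
    obtain ⟨z, hz, hxz⟩ := hatt _ (hxX k) i
    exact connected_induce_union (hconn i).preconnected
      (by simp : (G.induce {x k}).Connected).preconnected hz rfl hxz.symm
  have hapex : ∀ {W S : Set V} k i, x k ∈ W → Z i ⊆ S → ∃ u ∈ W, ∃ v ∈ S, G.Adj u v :=
    fun k i hW hS => let ⟨z, hz, h⟩ := hatt _ (hxX k) i; ⟨x k, hW, z, hS hz, h⟩
  -- Branch sets `Z₁, Z₀, Z₄ ∪ {x₂}, Z₃ ∪ {x₁}, Z₂ ∪ {x₀}, {x₃}`, added one at a time; every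
  -- edge except `Z₀`–`Z₁` comes from some `xₖ` seeing every `Zᵢ`.
  have c1 := isCluster_elim0.cons (G := G) (hconn 1) (fun i => i.elim0) (fun i => i.elim0)
  have c2 := c1.cons (hconn 0) (by simp [Fin.forall_fin_succ, hd])
    (by simpa [Fin.forall_fin_succ] using h01)
  have c3 := c2.cons (hins 4 2) (by simp [Fin.forall_fin_succ, hd, hxZ])
    (by simp only [Fin.forall_fin_succ, Fin.cons_zero, Fin.cons_succ, IsEmpty.forall_iff, and_true]
        exact ⟨hapex 2 0 (by simp) subset_rfl, hapex 2 1 (by simp) subset_rfl⟩)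
  have c4 := c3.cons (hins 3 1) (by simp [Fin.forall_fin_succ, hd, hxZ, x.injective.eq_iff])
    (by simp only [Fin.forall_fin_succ, Fin.cons_zero, Fin.cons_succ, IsEmpty.forall_iff, and_true]
        exact ⟨hapex 1 4 (by simp) Set.subset_union_left, hapex 1 0 (by simp) subset_rfl,
          hapex 1 1 (by simp) subset_rfl⟩)
  have c5 := c4.cons (hins 2 0) (by simp [Fin.forall_fin_succ, hd, hxZ, x.injective.eq_iff])
    (by simp only [Fin.forall_fin_succ, Fin.cons_zero, Fin.cons_succ, IsEmpty.forall_iff, and_true]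
        exact ⟨hapex 0 3 (by simp) Set.subset_union_left, hapex 0 4 (by simp) Set.subset_union_left,
          hapex 0 0 (by simp) subset_rfl, hapex 0 1 (by simp) subset_rfl⟩)
  have c6 := c5.cons (W := {x 3}) (by simp)
    (by simp [Fin.forall_fin_succ, hxZ, x.injective.eq_iff])
    (by simp only [Fin.forall_fin_succ, Fin.cons_zero, Fin.cons_succ, IsEmpty.forall_iff, and_true]
        exact ⟨hapex 3 2 rfl Set.subset_union_left, hapex 3 3 rfl Set.subset_union_left,
          hapex 3 4 rfl Set.subset_union_left, hapex 3 0 rfl subset_rfl, hapex 3 1 rfl subset_rfl⟩)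
  exact ⟨_, c6⟩

theorem hasCliqueMinor_six_of_adj {X : Set V} (hX : 4 ≤ X.ncard) {Z : Fin 5 → Set V}
    (hconn : ∀ i, (G.induce (Z i)).Connected) (hdisj : Pairwise (Disjoint on Z))
    (hZX : ∀ i, Disjoint (Z i) X) (hatt : ∀ x ∈ X, ∀ i, ∃ z ∈ Z i, G.Adj x z) {i j : Fin 5}
    (hij : i ≠ j) (hadj : ∃ u ∈ Z i, ∃ v ∈ Z j, G.Adj u v) : HasCliqueMinor G 6 := by
  obtain ⟨σ, rfl, rfl⟩ := Equiv.Perm.exists_apply_eq_and_apply_eq (by decide : (0 : Fin 5) ≠ 1) hij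
  exact hasCliqueMinor_six hX (fun k => hconn (σ k)) (fun k l h => hdisj (σ.injective.ne h))
    (fun k => hZX (σ k)) (fun x hx k => hatt x hx (σ k)) hadj

end SixMinor

section Counting

variable {V ι : Type*} {G : SimpleGraph V}

theorem ncard_inter_union_biUnion [Finite V] {X : Set V} {K : ι → Set V}
    (hdisj : Pairwise (Disjoint on K)) (hKX : ∀ i, Disjoint (K i) X) (C : Set V)
    (s : Finset ι) :
    (C ∩ (X ∪ ⋃ i ∈ s, K i)).ncard = (C ∩ X).ncard + ∑ i ∈ s, (C ∩ K i).ncard := by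
  have hU : (C ∩ ⋃ i ∈ s, K i).ncard = ∑ i ∈ s, (C ∩ K i).ncard := by
    have := s.finite_toSet.ncard_biUnion (s := fun i => C ∩ K i) (fun _ _ => Set.toFinite _)
      fun i _ j _ hij => (hdisj hij).mono Set.inter_subset_right Set.inter_subset_right
    rwa [finsum_mem_coe_finset, Finset.set_biUnion_coe, ← Set.inter_iUnion₂] at this
  rw [Set.inter_union_distrib_left, Set.ncard_union_eq, hU]
  exact (Set.disjoint_iUnion₂_right.mpr fun i _ => (hKX i).symm).mono
    Set.inter_subset_right Set.inter_subset_right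

variable [Fintype V] [Fintype ι] {A B X : Set V} {K : ι → Set V}

theorem IsMinimalCandidate.card_le_of_subset_left (hmin : IsMinimalCandidate G A B)
    (hXA : X ⊆ A) (hX : X.Nonempty) (hdisj : Pairwise (Disjoint on K))
    (hsep : ∀ i, IsSeparatedBy G X (K i)) (hB : ∀ i, (B ∩ K i).Nonempty) :
    Fintype.card ι ≤ X.ncard := by
  obtain ⟨⟨-, hAB, hedge⟩, hBA, -, -, -⟩ := hmin.1
  have hnbr : ∀ a ∈ A, ∀ w, G.Adj a w → w ∉ X := fun a ha w h hw =>
    hAB w ⟨hXA hw, (hedge h).mp ha⟩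
  obtain ⟨x, hx⟩ := hX
  have hK : ∀ i, (A ∩ K i).ncard + 1 ≤ (B ∩ K i).ncard := fun i =>
    hmin.ncard_inter_lt (fun h => Set.disjoint_right.mp (hsep i).1 hx (h ▸ trivial))
      (fun a ha w h => ((hsep i).2 ha.2 h).resolve_right (hnbr a ha.1 w h)) (hB i)
  let S := X ∪ ⋃ i ∈ Finset.univ, K i
  have hR : (A ∩ Sᶜ).ncard ≤ (B ∩ Sᶜ).ncard := by
    refine hmin.ncard_inter_le (fun h => (h ▸ trivial : x ∈ Sᶜ) (Or.inl hx)) fun a ha w h => ?_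
    simp only [S, Set.mem_inter_iff, Set.mem_compl_iff, Set.mem_union, Finset.mem_univ,
      Set.iUnion_true, Set.mem_iUnion, not_or, not_exists] at ha ⊢
    refine ⟨hnbr a ha.1 w h, fun i hw => ?_⟩
    rcases (hsep i).2 hw h.symm with h' | h'
    exacts [ha.2.2 i h', ha.2.1 h']
  have hsplit : ∀ C, C.ncard = (C ∩ X).ncard + ∑ i, (C ∩ K i).ncard + (C ∩ Sᶜ).ncard :=
    fun C => by
      rw [← ncard_inter_union_biUnion hdisj (fun i => (hsep i).1), ← Set.sdiff_eq,
        Set.ncard_inter_add_ncard_sdiff_eq_ncard]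
  have hAX : (A ∩ X).ncard = X.ncard := by rw [Set.inter_eq_right.mpr hXA]
  have hBX : (B ∩ X).ncard = 0 := by
    rw [Set.ncard_eq_zero, Set.eq_empty_iff_forall_notMem]
    exact fun v hv => hAB v ⟨hXA hv.2, hv.1⟩
  have hsum : ∑ i, (A ∩ K i).ncard + Fintype.card ι ≤ ∑ i, (B ∩ K i).ncard := by
    have := Finset.sum_le_sum fun i (_ : i ∈ Finset.univ) => hK i
    rwa [Finset.sum_add_distrib, Finset.sum_const, smul_eq_mul, mul_one, Finset.card_univ] at this
  have := hsplit A
  have := hsplit B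
  omega

theorem IsMinimalCandidate.ncard_inter_lt_of_subset_right (hmin : IsMinimalCandidate G A B)
    (hXB : X ⊆ B) (hX : X.Nonempty) {K : Set V} (hsep : IsSeparatedBy G X K) (hne : K.Nonempty) :
    (B ∩ K).ncard < (A ∩ K).ncard := by
  obtain ⟨⟨-, hAB, -⟩, hBA, -, -, -⟩ := hmin.1
  have hlt := hmin.ncard_inter_lt (S := Kᶜ) (fun h => (h ▸ trivial : hne.some ∈ Kᶜ) hne.some_mem)
    (fun a ha w h hw => ha.2 ((hsep.2 hw h.symm).resolve_right fun hx => hAB a ⟨ha.1, hXB hx⟩))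
    (hX.mono fun x hx => ⟨hXB hx, Set.disjoint_right.mp hsep.1 hx⟩)
  rw [← Set.sdiff_eq, ← Set.sdiff_eq] at hlt
  have := Set.ncard_inter_add_ncard_sdiff_eq_ncard A K
  have := Set.ncard_inter_add_ncard_sdiff_eq_ncard B K
  omega

theorem IsMinimalCandidate.card_le_of_subset_right (hmin : IsMinimalCandidate G A B)
    (hXB : X ⊆ B) (hX : X.Nonempty) (hdisj : Pairwise (Disjoint on K))
    (hsep : ∀ i, IsSeparatedBy G X (K i)) (hne : ∀ i, (K i).Nonempty) :
    Fintype.card ι ≤ X.ncard := by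
  classical
  obtain ⟨⟨-, hAB, -⟩, -, -, -, -⟩ := hmin.1
  have hAX : ∀ a ∈ A, a ∉ X := fun a ha hx => hAB a ⟨ha, hXB hx⟩
  have hK : ∀ i, (B ∩ K i).ncard + 1 ≤ (A ∩ K i).ncard := fun i =>
    hmin.ncard_inter_lt_of_subset_right hXB hX (hsep i) (hne i)
  by_contra! hlt
  obtain ⟨i₀⟩ : Nonempty ι := Fintype.card_pos_iff.mp (by omega)
  let s := Finset.univ.erase i₀
  let S := X ∪ ⋃ i ∈ s, K i
  have hS : (A ∩ S).ncard < (B ∩ S).ncard := by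
    refine hmin.ncard_inter_lt (fun h => ?_) (fun a ha w h => ?_) ?_
    · obtain ⟨v, hv⟩ := hne i₀
      rcases (h ▸ trivial : v ∈ S) with hvX | hvU
      · exact Set.disjoint_left.mp (hsep i₀).1 hv hvX
      · obtain ⟨i, hi, hvi⟩ := Set.mem_iUnion₂.mp hvU
        exact Set.disjoint_left.mp (hdisj (Finset.ne_of_mem_erase hi).symm) hv hvi
    · rcases ha.2 with haX | haU
      · exact absurd haX (hAX a ha.1)
      obtain ⟨i, hi, hai⟩ := Set.mem_iUnion₂.mp haU
      rcases (hsep i).2 hai h with hw | hw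
      · exact Or.inr (Set.mem_iUnion₂.mpr ⟨i, hi, hw⟩)
      · exact Or.inl hw
    · obtain ⟨x, hx⟩ := hX
      exact ⟨x, hXB hx, Or.inl hx⟩
  rw [ncard_inter_union_biUnion hdisj (fun i => (hsep i).1),
    ncard_inter_union_biUnion hdisj (fun i => (hsep i).1)] at hS
  have hsum : ∑ i ∈ s, (B ∩ K i).ncard + s.card ≤ ∑ i ∈ s, (A ∩ K i).ncard := by
    have := Finset.sum_le_sum fun i (_ : i ∈ s) => hK i
    rwa [Finset.sum_add_distrib, Finset.sum_const, smul_eq_mul, mul_one] at this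
  have hs : s.card = Fintype.card ι - 1 := by
    rw [Finset.card_erase_of_mem (Finset.mem_univ _), Finset.card_univ]
  have hAX' : (A ∩ X).ncard = 0 := by
    rw [Set.ncard_eq_zero, Set.eq_empty_iff_forall_notMem]
    exact fun v hv => hAX v hv.1 hv.2
  rw [Set.inter_eq_right.mpr hXB] at hS
  omega

end Counting

/-- In a minimal candidate, for `X ⊆ A` or `X ⊆ B` with `|X| = 4`, there are no five
pairwise disjoint connected subgraphs of `G \ X` such that every vertex of `X` has a
neighbour in each of them. -/
theorem minimalCandidate_no_five_attachments {V : Type} [Fintype V] (G : SimpleGraph V)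
    (A B : Set V) (hmin : IsMinimalCandidate G A B) (X : Set V)
    (hX : X ⊆ A ∨ X ⊆ B) (hcard : X.ncard = 4) :
    ¬ ∃ Y : Fin 5 → Set V,
        (∀ i, Disjoint (Y i) X) ∧
        (∀ i, (G.induce (Y i)).Connected) ∧
        (Pairwise fun i j => Disjoint (Y i) (Y j)) ∧
        ∀ x ∈ X, ∀ i, ∃ y ∈ Y i, G.Adj x y := by
  rintro ⟨Y, hYX, hYconn, hYdisj, hYadj⟩
  rcases exists_adj_enlargement_or_separated hYconn hYdisj hYX with
    ⟨Z, hYZ, hZconn, hZdisj, hZX, i, j, hij, hadj⟩ | ⟨K, hYK, hKdisj, hKsep⟩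
  · refine hmin.1.2.2.2.2 (hasCliqueMinor_six_of_adj hcard.ge hZconn hZdisj hZX
      (fun x hx k => ?_) hij hadj)
    obtain ⟨y, hy, hxy⟩ := hYadj x hx k
    exact ⟨y, hYZ k hy, hxy⟩
  have hXne : X.Nonempty := Set.nonempty_of_ncard_ne_zero (by omega)
  suffices Fintype.card (Fin 5) ≤ X.ncard by rw [Fintype.card_fin] at this; omega
  rcases hX with hXA | hXB
  · refine hmin.card_le_of_subset_left hXA hXne hKdisj hKsep fun k => ?_
    obtain ⟨x, hx⟩ := hXne
    obtain ⟨y, hy, hxy⟩ := hYadj x hx k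
    exact ⟨y, (hmin.1.1.2.2 hxy).mp (hXA hx), hYK k hy⟩
  · exact hmin.card_le_of_subset_right hXB hXne hKdisj hKsep fun k =>
      (Set.nonempty_coe_sort.mp (hYconn k).nonempty).mono (hYK k)
end

section
/- Let G be a minimal candidate with bipartition (A,B). If two distinct vertices b_1, b_2 ∈ B have a common neighbour in A, then they have at least two common neighbours in A. -/
open SimpleGraph Function

/-!
If `b₁, b₂ ∈ B` had a unique common neighbour `a`, contract the path `b₁ a b₂` onto `b₁` and
keep only the edges between `A` and `B`. This loses two vertices and no edges, and leaves a
bipartite graph with `|A| - 1 ≥ |B| - 1 > 0`; a `K₆` minor of it would be a `K₆` minor of `G`,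
since it is a subgraph of a contraction of `G`. A vertex `x ∈ A \ {a}` keeps its degree, because
its neighbours `b₁` and `b₂` are merged only if `x` is adjacent to both, i.e. `x = a`. So it is a
smaller candidate, contradicting minimality.
-/
namespace SimpleGraph

variable {V W : Type*} {G : SimpleGraph V} {H : SimpleGraph W}

lemma induce_biUnion_connected {β : W → Set V} {T : Set W} (hT : (H.induce T).Connected)
    (hβ : ∀ w ∈ T, (G.induce (β w)).Connected)
    (hadj : ∀ w ∈ T, ∀ w' ∈ T, H.Adj w w' → ∃ x ∈ β w, ∃ y ∈ β w', G.Adj x y) :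
    (G.induce (⋃ w ∈ T, β w)).Connected := by
  have hsub : ∀ w ∈ T, β w ⊆ ⋃ w ∈ T, β w := fun w hw => Set.subset_biUnion_of_mem hw
  have lift : ∀ w (hw : w ∈ T) {x y} (hx : x ∈ β w) (hy : y ∈ β w),
      (G.induce (⋃ w ∈ T, β w)).Reachable ⟨x, hsub w hw hx⟩ ⟨y, hsub w hw hy⟩ :=
    fun w hw x y hx hy =>
      ((hβ w hw).preconnected ⟨x, hx⟩ ⟨y, hy⟩).map (induceHomOfLE G (hsub w hw)).toHom
  obtain ⟨w₀, hw₀⟩ := hT.nonempty.some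
  obtain ⟨x₀, hx₀⟩ := (hβ w₀ hw₀).nonempty.some
  have reach : ∀ u v : T, (H.induce T).Reachable u v → ∀ x (hx : x ∈ β u) y (hy : y ∈ β v),
      (G.induce (⋃ w ∈ T, β w)).Reachable ⟨x, hsub _ u.2 hx⟩ ⟨y, hsub _ v.2 hy⟩ := by
    intro u v ⟨p⟩
    induction p with
    | nil => exact fun x hx y hy => lift _ (Subtype.prop _) hx hy
    | cons h p ih =>
      intro x hx y hy
      obtain ⟨x', hx', y', hy', hxy⟩ := hadj _ (Subtype.prop _) _ (Subtype.prop _) h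
      exact (lift _ (Subtype.prop _) hx hx').trans
        ((Adj.reachable (by simpa using hxy)).trans (ih y' hy' y hy))
  rw [connected_iff_exists_forall_reachable]
  refine ⟨⟨x₀, hsub w₀ hw₀ hx₀⟩, fun ⟨x, hx⟩ => ?_⟩
  obtain ⟨w, hw, hxw⟩ := Set.mem_iUnion₂.mp hx
  exact reach ⟨w₀, hw₀⟩ ⟨w, hw⟩ (hT.preconnected _ _) x₀ hx₀ x hxw

structure IsMinorModel (H : SimpleGraph W) (G : SimpleGraph V) (β : W → Set V) : Prop where
  connected : ∀ w, (G.induce (β w)).Connected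
  pairwise_disjoint : Pairwise (Disjoint on β)
  exists_adj : ∀ ⦃w w'⦄, H.Adj w w' → ∃ x ∈ β w, ∃ y ∈ β w', G.Adj x y

theorem IsMinorModel.hasCliqueMinor {β : W → Set V} (hβ : IsMinorModel H G β) {t : ℕ}
    (h : HasCliqueMinor H t) : HasCliqueMinor G t := by
  obtain ⟨f, hne, hconn, hdisj, hadj⟩ := h
  refine ⟨fun i => ⋃ w ∈ f i, β w, fun i => ?_, fun i => ?_, fun i j hij => ?_, fun i j hij => ?_⟩
  · obtain ⟨w, hw⟩ := hne i
    obtain ⟨x, hx⟩ := (hβ.connected w).nonempty.some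
    exact ⟨x, Set.mem_biUnion hw hx⟩
  · exact induce_biUnion_connected (hconn i) (fun w _ => hβ.connected w)
      (fun _ _ _ _ h => hβ.exists_adj h)
  · refine Set.disjoint_iUnion₂_left.mpr fun w hw =>
      Set.disjoint_iUnion₂_right.mpr fun w' hw' => ?_
    exact hβ.pairwise_disjoint fun h => Set.disjoint_left.mp (hdisj hij) hw (h ▸ hw')
  · obtain ⟨u, hu, v, hv, huv⟩ := hadj i j hij
    obtain ⟨x, hx, y, hy, hxy⟩ := hβ.exists_adj huv
    exact ⟨x, Set.mem_biUnion hu hx, y, Set.mem_biUnion hv hy, hxy⟩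

lemma isMinorModel_singleton (f : H →g G) (hf : Injective f) :
    IsMinorModel H G fun w => {f w} where
  connected w := by rw [induce_singleton_eq_top]; exact connected_top
  pairwise_disjoint w w' h := Set.disjoint_singleton.mpr (hf.ne h)
  exists_adj w w' h := ⟨f w, rfl, f w', rfl, f.map_adj h⟩

lemma isMinorModel_map {π : V → W} (hπ : ∀ w, (G.induce (π ⁻¹' {w})).Connected) :
    IsMinorModel (G.map π) G fun w => π ⁻¹' {w} where
  connected := hπ
  pairwise_disjoint w w' h := Set.disjoint_left.mpr fun x hx hx' => h (hx.symm.trans hx')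
  exists_adj := by
    rintro _ _ ⟨-, x, y, hxy, rfl, rfl⟩
    exact ⟨x, rfl, y, rfl, hxy⟩

lemma ncard_edgeSet_map_le [Finite V] (π : V → W) :
    (G.map π).edgeSet.ncard ≤ G.edgeSet.ncard := by
  refine (Set.ncard_le_ncard (t := Sym2.map π '' G.edgeSet) ?_ ((Set.toFinite _).image _)).trans
    (Set.ncard_image_le (Set.toFinite _))
  rintro e he
  induction e using Sym2.ind with
  | _ u v =>
    obtain ⟨-, x, y, hxy, rfl, rfl⟩ := he
    exact ⟨s(x, y), hxy, rfl⟩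

end SimpleGraph

theorem HasCliqueMinor.mono {V : Type*} {G G' : SimpleGraph V} (hle : G ≤ G') {t : ℕ}
    (h : HasCliqueMinor G t) : HasCliqueMinor G' t :=
  (isMinorModel_singleton (Hom.ofLE hle) injective_id).hasCliqueMinor h

theorem IsCandidate.of_iso {V W : Type*} {G : SimpleGraph V} {G' : SimpleGraph W} (φ : G ≃g G')
    {A B : Set W} (h : IsCandidate G' A B) : IsCandidate G (φ ⁻¹' A) (φ ⁻¹' B) := by
  obtain ⟨⟨hcover, hdisj, hedge⟩, hcard, hne, hdeg, hminor⟩ := h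
  have hncard (S : Set W) : (φ ⁻¹' S).ncard = S.ncard :=
    Set.ncard_preimage_of_injective_subset_range φ.injective (by simp [φ.surjective.range_eq])
  refine ⟨⟨fun v => hcover (φ v), fun v => hdisj (φ v),
      fun u v huv => hedge (φ.map_adj_iff.mpr huv)⟩,
    by rwa [hncard, hncard], hne.preimage φ.surjective, fun v hv => ?_, fun h => hminor ?_⟩
  · rw [← Nat.card_coe_set_eq, Nat.card_congr (φ.mapNeighborSet v), Nat.card_coe_set_eq]
    exact hdeg _ hv
  · exact (isMinorModel_singleton φ.toHom φ.injective).hasCliqueMinor h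

theorem IsMinimalCandidate.card_add_ncard_edgeSet_le {V W : Type*} [Fintype V] [Finite W]
    {G : SimpleGraph V} {A B : Set V} (hmin : IsMinimalCandidate G A B) {H : SimpleGraph W}
    {A' B' : Set W} (h : IsCandidate H A' B') :
    Fintype.card V + G.edgeSet.ncard ≤ Nat.card W + H.edgeSet.ncard := by
  let φ := Iso.comap (Finite.equivFin W).symm H
  have := hmin.2 _ _ _ _ (h.of_iso φ)
  rwa [← Nat.card_coe_set_eq H.edgeSet, ← Nat.card_congr φ.mapEdgeSet,
    Nat.card_coe_set_eq]

lemma isBipartitionWith_inf_fromRel {V : Type*} (H : SimpleGraph V) {A B : Set V}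
    (hcover : ∀ v, v ∈ A ∨ v ∈ B) (hdisj : ∀ v, ¬(v ∈ A ∧ v ∈ B)) :
    IsBipartitionWith (H ⊓ fromRel fun u v => u ∈ A ∧ v ∈ B) A B := by
  refine ⟨hcover, hdisj, fun u v huv => ?_⟩
  rcases huv.2.2 with ⟨hu, hv⟩ | ⟨hv, hu⟩
  · exact iff_of_true hu hv
  · exact iff_of_false (fun h => hdisj u ⟨h, hu⟩) (fun h => hdisj v ⟨hv, h⟩)

lemma ncard_preimage_coe_compl {V : Type*} (D S : Set V) :
    (Subtype.val ⁻¹' S : Set ↥Dᶜ).ncard = (S \ D).ncard := by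
  rw [← Set.ncard_image_of_injective _ Subtype.val_injective, Subtype.image_preimage_coe,
    Set.inter_comm, ← Set.sdiff_eq]

section Collapse

variable {V : Type*} {D : Set V} {c : V} (hc : c ∉ D)

open Classical in
noncomputable def collapseTo (v : V) : ↥Dᶜ :=
  if hv : v ∈ D then ⟨c, hc⟩ else ⟨v, hv⟩

lemma coe_collapseTo_of_mem_insert {v : V} (hv : v ∈ insert c D) : (collapseTo hc v : V) = c := by
  unfold collapseTo
  split_ifs with h
  · rfl
  · exact hv.resolve_right h

lemma coe_collapseTo_of_notMem {v : V} (hv : v ∉ D) : (collapseTo hc v : V) = v := by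
  unfold collapseTo
  rw [dif_neg hv]

lemma collapseTo_coe (w : ↥Dᶜ) : collapseTo hc w = w :=
  Subtype.ext (coe_collapseTo_of_notMem hc w.2)

lemma preimage_collapseTo_center : collapseTo hc ⁻¹' {⟨c, hc⟩} = insert c D := by
  ext v
  rw [Set.mem_preimage, Set.mem_singleton_iff, ← Subtype.coe_inj]
  refine ⟨fun h => ?_, coe_collapseTo_of_mem_insert hc⟩
  by_contra hv
  rw [coe_collapseTo_of_notMem hc (hv <| Or.inr ·)] at h
  exact hv (Or.inl h)

lemma preimage_collapseTo_of_ne {w : ↥Dᶜ} (hw : (w : V) ≠ c) :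
    collapseTo hc ⁻¹' {w} = {(w : V)} := by
  ext v
  rw [Set.mem_preimage, Set.mem_singleton_iff, Set.mem_singleton_iff, ← Subtype.coe_inj]
  by_cases hv : v ∈ insert c D
  · rw [coe_collapseTo_of_mem_insert hc hv]
    refine iff_of_false hw.symm fun h => ?_
    rcases hv with hv | hv
    exacts [hw (h ▸ hv), w.2 (h ▸ hv)]
  · rw [coe_collapseTo_of_notMem hc (hv <| Or.inr ·)]

lemma connected_induce_preimage_collapseTo {G : SimpleGraph V}
    (hD : (G.induce (insert c D)).Connected) (w : ↥Dᶜ) :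
    (G.induce (collapseTo hc ⁻¹' {w})).Connected := by
  by_cases hwc : (w : V) = c
  · obtain rfl : w = ⟨c, hc⟩ := Subtype.ext hwc
    rwa [preimage_collapseTo_center]
  · rw [preimage_collapseTo_of_ne hc hwc, induce_singleton_eq_top]
    exact connected_top

lemma injOn_collapseTo {T : Set V} (hT : (T ∩ insert c D).Subsingleton) :
    Set.InjOn (collapseTo hc) T := by
  intro x hx y hy hxy
  have hxy' := congrArg Subtype.val hxy
  by_cases hxD : x ∈ insert c D <;> by_cases hyD : y ∈ insert c D
  · exact hT ⟨hx, hxD⟩ ⟨hy, hyD⟩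
  · rw [coe_collapseTo_of_mem_insert hc hxD, coe_collapseTo_of_notMem hc (hyD <| Or.inr ·)] at hxy'
    exact absurd (Or.inl hxy'.symm) hyD
  · rw [coe_collapseTo_of_mem_insert hc hyD, coe_collapseTo_of_notMem hc (hxD <| Or.inr ·)] at hxy'
    exact absurd (Or.inl hxy') hxD
  · rwa [coe_collapseTo_of_notMem hc (hxD <| Or.inr ·),
      coe_collapseTo_of_notMem hc (hyD <| Or.inr ·)] at hxy'

-- `G.map` along the non-injective `collapseTo hc` contracts `insert c D` onto `c`.
noncomputable def bipartiteCollapse (G : SimpleGraph V) (A B : Set V) : SimpleGraph ↥Dᶜ :=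
  G.map (collapseTo hc) ⊓ fromRel fun u v => (u : V) ∈ A ∧ (v : V) ∈ B

lemma ncard_edgeSet_bipartiteCollapse_le [Finite V] (G : SimpleGraph V) (A B : Set V) :
    (bipartiteCollapse hc G A B).edgeSet.ncard ≤ G.edgeSet.ncard :=
  (Set.ncard_le_ncard (edgeSet_mono inf_le_left)).trans (ncard_edgeSet_map_le _)

end Collapse

section Contraction

variable {V : Type*} {G : SimpleGraph V} {A B : Set V} {a b₁ b₂ : V}

lemma ncard_neighborSet_le_bipartiteCollapse [Finite V] (hbip : IsBipartitionWith G A B)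
    (ha : a ∈ A) (hb₁ : b₁ ∈ B) (huniq : ∀ x, G.Adj x b₁ → G.Adj x b₂ → x = a)
    (hc : b₁ ∉ ({a, b₂} : Set V)) (x : ↥({a, b₂} : Set V)ᶜ) (hx : (x : V) ∈ A) :
    (G.neighborSet x).ncard ≤ ((bipartiteCollapse hc G A B).neighborSet x).ncard := by
  obtain ⟨-, hdisj, hedge⟩ := hbip
  have hN : G.neighborSet x ⊆ B := fun y hy => (hedge hy).1 hx
  refine Set.ncard_le_ncard_of_injOn (collapseTo hc) (fun y hy => ?_) (injOn_collapseTo hc ?_)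
  · have hyB : (collapseTo hc y : V) ∈ B := by
      by_cases hyD : y ∈ ({a, b₂} : Set V)
      · rwa [coe_collapseTo_of_mem_insert hc (Or.inr hyD)]
      · rw [coe_collapseTo_of_notMem hc hyD]; exact hN hy
    have hne : x ≠ collapseTo hc y := fun h => hdisj x ⟨hx, h ▸ hyB⟩
    refine ⟨?_, hne, Or.inl ⟨hx, hyB⟩⟩
    simpa only [collapseTo_coe] using
      map_adj_apply' (f := collapseTo hc) hy (by rwa [collapseTo_coe])
  · have haN : a ∉ G.neighborSet x := fun h => hdisj a ⟨ha, hN h⟩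
    have hxa : (x : V) ≠ a := fun h => x.2 (Or.inl h)
    have hS : ∀ y ∈ G.neighborSet x ∩ insert b₁ {a, b₂}, y = b₁ ∨ y = b₂ := by
      rintro y ⟨hy, h | h | h⟩
      exacts [Or.inl h, absurd (h ▸ hy) haN, Or.inr h]
    by_cases hx₁ : G.Adj x b₁
    · refine (Set.subsingleton_singleton (a := b₁)).anti fun y hy => ?_
      exact (hS y hy).resolve_right fun h => hxa (huniq x hx₁ (h ▸ hy.1))
    · refine (Set.subsingleton_singleton (a := b₂)).anti fun y hy => ?_
      exact (hS y hy).resolve_left fun h => hx₁ (h ▸ hy.1)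

theorem IsCandidate.isCandidate_bipartiteCollapse [Finite V] (hG : IsCandidate G A B)
    (ha : a ∈ A) (hb₁ : b₁ ∈ B) (hb₂ : b₂ ∈ B) (ha₁ : G.Adj a b₁) (ha₂ : G.Adj a b₂)
    (huniq : ∀ x, G.Adj x b₁ → G.Adj x b₂ → x = a) (hc : b₁ ∉ ({a, b₂} : Set V)) :
    IsCandidate (bipartiteCollapse hc G A B) (Subtype.val ⁻¹' A) (Subtype.val ⁻¹' B) := by
  obtain ⟨hbip, hcard, -, hdeg, hminor⟩ := hG
  have haB : a ∉ B := fun h => hbip.2.1 a ⟨ha, h⟩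
  have hb₂A : b₂ ∉ A := fun h => hbip.2.1 b₂ ⟨h, hb₂⟩
  have hpath : (G.induce (insert b₁ {a, b₂})).Connected := by
    have hsupp : insert b₁ {a, b₂} =
        {v | v ∈ (Walk.cons ha₁.symm (Walk.cons ha₂ Walk.nil)).support} := by
      ext v; simp
    rw [hsupp]
    exact Walk.connected_induce_support _
  refine ⟨isBipartitionWith_inf_fromRel _ (fun v => hbip.1 v) (fun v => hbip.2.1 v), ?_,
    ⟨⟨b₁, hc⟩, hb₁⟩, fun x hx => (hdeg x hx).trans
      (ncard_neighborSet_le_bipartiteCollapse hbip ha hb₁ huniq hc x hx), fun h => hminor ?_⟩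
  · have hA : A \ {a, b₂} = A \ {a} := by rw [Set.pair_comm, Set.sdiff_insert_of_notMem hb₂A]
    rw [ncard_preimage_coe_compl, ncard_preimage_coe_compl, hA, Set.sdiff_insert_of_notMem haB,
      Set.ncard_sdiff_singleton_of_mem ha, Set.ncard_sdiff_singleton_of_mem hb₂]
    omega
  · exact (isMinorModel_map (connected_induce_preimage_collapseTo hc hpath)).hasCliqueMinor
      (h.mono inf_le_left)

end Contraction

/-- In a minimal candidate, two distinct vertices of `B` with a common neighbour in `A`
have at least two common neighbours in `A`. -/
theorem minimalCandidate_two_common_neighbours {V : Type} [Fintype V] (G : SimpleGraph V)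
    (A B : Set V) (hmin : IsMinimalCandidate G A B) (b₁ b₂ : V) (hb₁ : b₁ ∈ B)
    (hb₂ : b₂ ∈ B) (hne : b₁ ≠ b₂) (hcommon : ∃ a ∈ A, G.Adj a b₁ ∧ G.Adj a b₂) :
    2 ≤ {a | a ∈ A ∧ G.Adj a b₁ ∧ G.Adj a b₂}.ncard := by
  obtain ⟨a, ha, ha₁, ha₂⟩ := hcommon
  by_contra! hlt
  have hbip := hmin.1.1
  have huniq (x : V) (hx₁ : G.Adj x b₁) (hx₂ : G.Adj x b₂) : x = a :=
    (Set.ncard_le_one (s := {a | a ∈ A ∧ G.Adj a b₁ ∧ G.Adj a b₂})).mp (by omega)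
      x ⟨(hbip.2.2 hx₁).2 hb₁, hx₁, hx₂⟩ a ⟨ha, ha₁, ha₂⟩
  have hab₂ : a ≠ b₂ := ha₂.ne
  have hc : b₁ ∉ ({a, b₂} : Set V) := by
    rintro (h | h)
    exacts [ha₁.ne h.symm, hne h]
  have hle := hmin.card_add_ncard_edgeSet_le
    (hmin.1.isCandidate_bipartiteCollapse ha hb₁ hb₂ ha₁ ha₂ huniq hc)
  have hE := ncard_edgeSet_bipartiteCollapse_le hc G A B
  have hV := Set.ncard_add_ncard_compl ({a, b₂} : Set V)
  rw [Set.ncard_pair hab₂, Nat.card_eq_fintype_card] at hV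
  rw [Nat.card_coe_set_eq] at hle
  omega
end

section
/- Let H be the complete graph on six vertices and let C_1,…,C_k be triangles of H (not necessarily distinct). Then for 1 ≤ i ≤ k there exists a path P_i with vertex set C_i, such that the graph M(C_1,…,C_k) ∪ P_1 ∪ ⋯ ∪ P_k contains a subgraph isomorphic to J. -/
open SimpleGraph Function

/-- `J`: the complete graph on six vertices minus the four edges of two
vertex-disjoint 3-vertex paths (the paths `0-1-2` and `3-4-5`). -/
def JGraph : SimpleGraph (Fin 6) :=
  completeGraph (Fin 6) \
    SimpleGraph.fromEdgeSet {s(0, 1), s(1, 2), s(3, 4), s(4, 5)}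

/-- `M(C_1,…,C_k)`: the graph on six vertices whose edges are the pairs not contained
in any of the triangles `C i`. -/
def MGraph {k : ℕ} (C : Fin k → Finset (Fin 6)) : SimpleGraph (Fin 6) :=
  SimpleGraph.fromRel fun u v => ∀ i, ¬(u ∈ C i ∧ v ∈ C i)

/-- The `C`-path with middle vertex `m`: the 2-edge path on the triangle `C`
whose middle vertex is `m`. -/
def triPath (C : Finset (Fin 6)) (m : Fin 6) : SimpleGraph (Fin 6) :=
  SimpleGraph.fromRel fun u v => u = m ∧ u ∈ C ∧ v ∈ C

/-!
Choosing the middle vertex `m` of the path on a triangle `t` amounts to choosing its *base*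
`t \ {m}`, the one edge of `t` off the path. Label `J` so that its complement is the pair of paths
`0-1-2`, `3-4-5`; then `M ∪ ⋃ Pᵢ` contains `J` as soon as every base is an edge of these two paths
or lies on the path of another triangle. Up to relabelling the vertices, either two triangles
are disjoint, or all triangles share a vertex, or two of them meet in a single vertex, or any two
meet in an edge. In each case a few triangles of the family are pinned down, and a fixed
preference order for the bases is checked by `decide` on all twenty triangles of `K₆`.
-/

open Finset Equiv

lemma map_map_symm {α β : Type*} (σ : α ≃ β) (s : Finset β) :
    (s.map σ.symm.toEmbedding).map σ.toEmbedding = s :=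
  σ.finsetCongr.apply_symm_apply s

lemma map_trans_toEmbedding {α β γ : Type*} (σ : α ≃ β) (ρ : β ≃ γ) (s : Finset α) :
    s.map (σ.trans ρ).toEmbedding = (s.map σ.toEmbedding).map ρ.toEmbedding := by
  simp [Finset.map_map]

lemma exists_perm_of_eq_univ {x a b c d w : Fin 6}
    (h : ({x, a, b, c, d, w} : Finset (Fin 6)) = univ) :
    ∃ σ : Perm (Fin 6), σ 0 = x ∧ σ 1 = a ∧ σ 2 = b ∧ σ 3 = c ∧ σ 4 = d ∧ σ 5 = w := by
  have hsurj : Function.Surjective ![x, a, b, c, d, w] := fun v => by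
    have hv := h ▸ mem_univ v
    simp only [mem_insert, mem_singleton] at hv
    rcases hv with rfl | rfl | rfl | rfl | rfl | rfl
    exacts [⟨0, rfl⟩, ⟨1, rfl⟩, ⟨2, rfl⟩, ⟨3, rfl⟩, ⟨4, rfl⟩, ⟨5, rfl⟩]
  exact ⟨.ofBijective _ hsurj.bijective_of_finite, rfl, rfl, rfl, rfl, rfl, rfl⟩

def jComplEdges : List (Finset (Fin 6)) := [{0, 1}, {1, 2}, {3, 4}, {4, 5}]

lemma jGraph_adj_iff {u v : Fin 6} :
    JGraph.Adj u v ↔ u ≠ v ∧ ({u, v} : Finset (Fin 6)) ∉ jComplEdges := by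
  simp only [JGraph, sdiff_adj, fromEdgeSet_adj, top_adj, Set.mem_insert_iff,
    Set.mem_singleton_iff]
  revert u v
  decide

lemma triPath_adj_iff_ne {T b : Finset (Fin 6)} {m u v : Fin 6} (hb : b.card = 2)
    (hm : T \ b = {m}) (hu : u ∈ T) (hv : v ∈ T) (huv : u ≠ v) :
    (triPath T m).Adj u v ↔ {u, v} ≠ b := by
  have hmb : m ∉ b := (mem_sdiff.mp (hm ▸ mem_singleton_self m)).2
  have mem_b : ∀ x ∈ T, x ≠ m → x ∈ b := fun x hx hxm => by
    by_contra hxb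
    exact hxm (mem_singleton.mp (hm ▸ mem_sdiff.mpr ⟨hx, hxb⟩))
  simp only [triPath, fromRel_adj, ne_eq, huv, not_false_eq_true, hu, hv, and_true, true_and]
  constructor
  · rintro (rfl | rfl) rfl
    all_goals simp at hmb
  · intro hne
    by_contra! hum
    refine hne (eq_of_subset_of_card_le ?_ (by rw [hb, card_pair huv]))
    simp [insert_subset_iff, mem_b u hu hum.1, mem_b v hv hum.2]

def mGraphWithPaths {k : ℕ} (C : Fin k → Finset (Fin 6)) (m : Fin k → Fin 6) :
    SimpleGraph (Fin 6) :=
  MGraph C ⊔ ⨆ i, triPath (C i) (m i)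

lemma mGraphWithPaths_map_adj {k : ℕ} (C : Fin k → Finset (Fin 6)) (m : Fin k → Fin 6)
    (σ : Perm (Fin 6)) (x y : Fin 6) :
    (mGraphWithPaths (fun i => (C i).map σ.toEmbedding) (fun i => σ (m i))).Adj (σ x) (σ y) ↔
      (mGraphWithPaths C m).Adj x y := by
  simp [mGraphWithPaths, MGraph, triPath]

def PathChoiceContainsJ {k : ℕ} (C : Fin k → Finset (Fin 6)) : Prop :=
  ∃ m : Fin k → Fin 6, (∀ i, m i ∈ C i) ∧
    ∃ φ : Fin 6 ≃ Fin 6, ∀ u v : Fin 6, JGraph.Adj u v → (mGraphWithPaths C m).Adj (φ u) (φ v)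

def preferredBase (L : List (Finset (Fin 6))) (t : Finset (Fin 6)) : Finset (Fin 6) :=
  ((jComplEdges ++ L).find? (· ⊆ t)).getD ∅

def BaseIsCovered (L K : List (Finset (Fin 6))) (t : Finset (Fin 6)) : Prop :=
  preferredBase L t ⊆ t ∧ (preferredBase L t).card = 2 ∧
    (preferredBase L t ∈ jComplEdges ∨
      ∃ s ∈ K, preferredBase L t ⊆ s ∧ preferredBase L s ≠ preferredBase L t)

instance (L K : List (Finset (Fin 6))) : DecidablePred (BaseIsCovered L K) := fun _ => by
  unfold BaseIsCovered; infer_instance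

lemma exists_map_trans_eq {k : ℕ} {C : Fin k → Finset (Fin 6)} {τ : Perm (Fin 6)}
    {T : List (Finset (Fin 6))} (hT : ∀ t ∈ T, ∃ i, (C i).map τ.toEmbedding = t) (ρ : Perm (Fin 6))
    {K : List (Finset (Fin 6))} (hK : ∀ s ∈ K, ∃ t ∈ T, t.map ρ.toEmbedding = s) :
    ∀ s ∈ K, ∃ i, (C i).map (τ.trans ρ).toEmbedding = s := by
  intro s hs
  obtain ⟨t, ht, rfl⟩ := hK s hs
  obtain ⟨i, rfl⟩ := hT t ht
  exact ⟨i, map_trans_toEmbedding τ ρ (C i)⟩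

namespace PathChoiceContainsJ

variable {k : ℕ} {C : Fin k → Finset (Fin 6)}

lemma of_bases (hC : ∀ i, (C i).card = 3) (b : Fin k → Finset (Fin 6)) (hbC : ∀ i, b i ⊆ C i)
    (hb : ∀ i, (b i).card = 2) (hcov : ∀ i, b i ∈ jComplEdges ∨ ∃ j, b i ⊆ C j ∧ b j ≠ b i) :
    PathChoiceContainsJ C := by
  have hm : ∀ i, ∃ m, C i \ b i = {m} := fun i =>
    card_eq_one.mp (by rw [card_sdiff_of_subset (hbC i), hC i, hb i])
  choose m hm using hm
  refine ⟨m, fun i => (mem_sdiff.mp ((hm i).symm ▸ mem_singleton_self _)).1,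
    Equiv.refl _, fun u v huv => ?_⟩
  obtain ⟨hne, hF⟩ := jGraph_adj_iff.mp huv
  have path_adj : ∀ j, u ∈ C j → v ∈ C j → {u, v} ≠ b j → (mGraphWithPaths C m).Adj u v :=
    fun j hu hv h => Or.inr (iSup_adj.mpr
      ⟨j, (triPath_adj_iff_ne (hb j) (hm j) hu hv hne).mpr h⟩)
  by_cases hcovd : ∃ i, u ∈ C i ∧ v ∈ C i
  · obtain ⟨i, hu, hv⟩ := hcovd
    by_cases hbi : {u, v} = b i
    · rcases hcov i with hF' | ⟨j, hbj, hji⟩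
      · exact absurd (hbi ▸ hF') hF
      · rw [← hbi] at hbj hji
        exact path_adj j (hbj (by simp)) (hbj (by simp)) hji.symm
    · exact path_adj i hu hv hbi
  · push Not at hcovd
    exact Or.inl ((fromRel_adj _ _ _).mpr ⟨hne, Or.inl fun i ⟨hu, hv⟩ => hcovd i hu hv⟩)

lemma of_map (σ : Perm (Fin 6)) (h : PathChoiceContainsJ fun i => (C i).map σ.toEmbedding) :
    PathChoiceContainsJ C := by
  obtain ⟨m, hm, φ, hφ⟩ := h
  refine ⟨fun i => σ.symm (m i), fun i => by simpa using hm i, φ.trans σ.symm, fun u v huv => ?_⟩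
  rw [← mGraphWithPaths_map_adj C _ σ]
  simpa using hφ u v huv

lemma of_preferredBase (hC : ∀ i, (C i).card = 3) (τ : Perm (Fin 6))
    (L K : List (Finset (Fin 6))) (ok : Finset (Fin 6) → Prop)
    (hL : ∀ t : Finset (Fin 6), t.card = 3 → ok t → BaseIsCovered L K t)
    (hok : ∀ i, ok ((C i).map τ.toEmbedding)) (hK : ∀ s ∈ K, ∃ i, (C i).map τ.toEmbedding = s) :
    PathChoiceContainsJ C := by
  refine of_map τ (of_bases (fun i => by simp [hC i])
    (fun i => preferredBase L ((C i).map τ.toEmbedding)) ?_ ?_ ?_)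
  all_goals intro i; obtain ⟨hsub, hcard, hcov⟩ := hL _ (by simp [hC i]) (hok i)
  · exact hsub
  · exact hcard
  · refine hcov.imp_right ?_
    rintro ⟨s, hs, hsub', hne⟩
    obtain ⟨j, rfl⟩ := hK s hs
    exact ⟨j, hsub', hne⟩

lemma of_disjoint (hC : ∀ i, (C i).card = 3) {i j : Fin k} (h : Disjoint (C i) (C j)) :
    PathChoiceContainsJ C := by
  obtain ⟨x, a, b, -, -, -, hi⟩ := card_eq_three.mp (hC i)
  obtain ⟨c, d, w, -, -, -, hj⟩ := card_eq_three.mp (hC j)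
  have hunion : C i ∪ C j = univ :=
    eq_univ_of_card _ (by rw [card_union_of_disjoint h, hC i, hC j]; rfl)
  have hsix : ({x, a, b, c, d, w} : Finset (Fin 6)) = univ := by
    rw [← hunion, hi, hj, insert_union, insert_union, singleton_union]
  obtain ⟨σ, rfl, rfl, rfl, rfl, rfl, rfl⟩ := exists_perm_of_eq_univ hsix
  refine of_preferredBase hC σ.symm [{0, 2}, {3, 5}] [{0, 1, 2}, {3, 4, 5}] (fun _ => True)
    (by decide) (fun _ => trivial) ?_
  simpa using ⟨⟨i, by simp [hi]⟩, ⟨j, by simp [hj]⟩⟩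

lemma of_forall_mem_of_forall_triangle (hC : ∀ i, (C i).card = 3) {x : Fin 6}
    (hx : ∀ i, x ∈ C i) (hall : ∀ t : Finset (Fin 6), t.card = 3 → x ∈ t → ∃ i, C i = t) :
    PathChoiceContainsJ C := by
  refine of_preferredBase hC (swap 1 x) [{1, 3}] [{1, 3, 4}] (fun t => 1 ∈ t) (by decide)
    (fun i => by simpa [mem_map_equiv] using hx i) ?_
  simp only [List.mem_singleton, forall_eq]
  obtain ⟨i, hi⟩ := hall (({1, 3, 4} : Finset (Fin 6)).map (swap 1 x).symm.toEmbedding)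
    (by rw [card_map]; rfl) (by simp)
  exact ⟨i, by rw [hi, map_map_symm]⟩

lemma of_forall_mem_of_missing_triangle (hC : ∀ i, (C i).card = 3) {x : Fin 6}
    (hx : ∀ i, x ∈ C i) {t : Finset (Fin 6)} (ht : t.card = 3) (hxt : x ∈ t)
    (hCt : ∀ i, C i ≠ t) : PathChoiceContainsJ C := by
  obtain ⟨a, b, -, hab⟩ :=
    card_eq_two.mp (by rw [card_erase_of_mem hxt, ht] : (t.erase x).card = 2)
  obtain ⟨c, d, w, -, -, -, hcdw⟩ :=
    card_eq_three.mp (by rw [card_compl, ht]; rfl : tᶜ.card = 3)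
  have htx : t = {x, a, b} := by rw [← insert_erase hxt, hab]
  have hsix : ({c, x, d, a, w, b} : Finset (Fin 6)) = univ := by
    rw [← union_compl t, hcdw, htx]
    ext v
    simp only [mem_union, mem_insert, mem_singleton]
    tauto
  obtain ⟨σ, rfl, rfl, rfl, rfl, rfl, rfl⟩ := exists_perm_of_eq_univ hsix
  -- `{1, 3, 5}` is the only triangle through `1` without an edge of `jComplEdges`
  refine of_preferredBase hC σ.symm [] [] (fun t => 1 ∈ t ∧ t ≠ {1, 3, 5}) (by decide)
    (fun i => ⟨by simpa using hx i, fun h => hCt i ?_⟩) (by simp)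
  rw [← map_map_symm σ (C i), h, htx]
  simp

lemma of_forall_mem (hC : ∀ i, (C i).card = 3) {x : Fin 6} (hx : ∀ i, x ∈ C i) :
    PathChoiceContainsJ C := by
  by_cases hall : ∀ t : Finset (Fin 6), t.card = 3 → x ∈ t → ∃ i, C i = t
  · exact of_forall_mem_of_forall_triangle hC hx hall
  · push Not at hall
    obtain ⟨t, ht, hxt, hCt⟩ := hall
    exact of_forall_mem_of_missing_triangle hC hx ht hxt hCt

lemma of_pairwise_inter_nonempty (hC : ∀ i, (C i).card = 3)
    (hint : ∀ i j, (C i ∩ C j).Nonempty) (τ : Perm (Fin 6)) (L K : List (Finset (Fin 6)))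
    (hK : ∀ s ∈ K, ∃ i, (C i).map τ.toEmbedding = s)
    (hL : ∀ t : Finset (Fin 6), t.card = 3 → (∀ s ∈ K, (t ∩ s).Nonempty) → BaseIsCovered L K t) :
    PathChoiceContainsJ C := by
  refine of_preferredBase hC τ L K _ hL (fun i s hs => ?_) hK
  obtain ⟨j, rfl⟩ := hK s hs
  rw [← map_inter]
  exact (hint i j).map

lemma of_015_034_123 (hC : ∀ i, (C i).card = 3) (hint : ∀ i j, (C i ∩ C j).Nonempty)
    (τ : Perm (Fin 6)) (hK : ∀ s ∈ ([{0, 1, 5}, {0, 3, 4}, {1, 2, 3}] : List (Finset (Fin 6))),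
      ∃ i, (C i).map τ.toEmbedding = s) :
    PathChoiceContainsJ C :=
  of_pairwise_inter_nonempty hC hint τ [{0, 4}, {0, 5}, {1, 3}, {2, 3}] _ hK (by decide +kernel)

lemma of_012_034_123 (hC : ∀ i, (C i).card = 3) (hint : ∀ i j, (C i ∩ C j).Nonempty)
    (τ : Perm (Fin 6)) (hK : ∀ s ∈ ([{0, 1, 2}, {0, 3, 4}, {1, 2, 3}] : List (Finset (Fin 6))),
      ∃ i, (C i).map τ.toEmbedding = s) :
    PathChoiceContainsJ C :=
  of_pairwise_inter_nonempty hC hint τ [{0, 2}, {0, 3}, {1, 3}, {2, 3}] _ hK (by decide +kernel)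

lemma of_012_034 (hC : ∀ i, (C i).card = 3) (hint : ∀ i j, (C i ∩ C j).Nonempty)
    (τ : Perm (Fin 6)) {i j l : Fin k} (hi : (C i).map τ.toEmbedding = {0, 1, 2})
    (hj : (C j).map τ.toEmbedding = {0, 3, 4}) (hl : 0 ∉ (C l).map τ.toEmbedding) :
    PathChoiceContainsJ C := by
  have third : ∀ t : Finset (Fin 6), t.card = 3 → 0 ∉ t → (t ∩ {0, 1, 2}).Nonempty →
      (t ∩ {0, 3, 4}).Nonempty → t ∈ ([{1, 3, 5}, {1, 4, 5}, {2, 3, 5}, {2, 4, 5},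
        {1, 2, 3}, {1, 2, 4}, {1, 3, 4}, {2, 3, 4}] : List (Finset (Fin 6))) := by
    decide
  have hl' := third _ (by simp [hC l]) hl (by rw [← hi, ← map_inter]; exact (hint l i).map)
    (by rw [← hj, ← map_inter]; exact (hint l j).map)
  have hT : ∀ t ∈ [{0, 1, 2}, {0, 3, 4}, (C l).map τ.toEmbedding],
      ∃ i, (C i).map τ.toEmbedding = t := by
    simpa using ⟨⟨i, hi⟩, ⟨j, hj⟩⟩
  simp only [List.mem_cons, List.not_mem_nil, or_false] at hl'
  -- symmetries of `{0, 1, 2}, {0, 3, 4}` move the third triangle to one of two configurations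
  rcases hl' with h | h | h | h | h | h | h | h <;> rw [h] at hT
  · exact of_015_034_123 hC hint _ (exists_map_trans_eq hT (swap 2 5) (by decide))
  · exact of_015_034_123 hC hint _ (exists_map_trans_eq hT (swap 2 5 * swap 3 4) (by decide))
  · exact of_015_034_123 hC hint _ (exists_map_trans_eq hT (swap 2 5 * swap 1 2) (by decide))
  · exact of_015_034_123 hC hint _
      (exists_map_trans_eq hT (swap 2 5 * swap 1 2 * swap 3 4) (by decide))
  · exact of_012_034_123 hC hint _ (exists_map_trans_eq hT 1 (by decide))
  · exact of_012_034_123 hC hint _ (exists_map_trans_eq hT (swap 3 4) (by decide))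
  · exact of_012_034_123 hC hint _ (exists_map_trans_eq hT (swap 1 3 * swap 2 4) (by decide))
  · exact of_012_034_123 hC hint _ (exists_map_trans_eq hT (swap 1 4 * swap 2 3) (by decide))

lemma of_card_inter_eq_one (hC : ∀ i, (C i).card = 3) (hint : ∀ i j, (C i ∩ C j).Nonempty)
    (hnc : ∀ x, ∃ i, x ∉ C i) {i j : Fin k} (h1 : (C i ∩ C j).card = 1) :
    PathChoiceContainsJ C := by
  obtain ⟨x, hx⟩ := card_eq_one.mp h1
  have hxij : x ∈ C i ∩ C j := hx ▸ mem_singleton_self x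
  have hxi := mem_of_mem_inter_left hxij
  have hxj := mem_of_mem_inter_right hxij
  obtain ⟨a, b, -, hab⟩ :=
    card_eq_two.mp (by rw [card_erase_of_mem hxi, hC i] : ((C i).erase x).card = 2)
  obtain ⟨c, d, -, hcd⟩ :=
    card_eq_two.mp (by rw [card_erase_of_mem hxj, hC j] : ((C j).erase x).card = 2)
  have hunion : (C i ∪ C j).card = 5 := by
    have := card_union_add_card_inter (C i) (C j)
    rw [hC i, hC j, h1] at this
    omega
  obtain ⟨w, hw⟩ := card_eq_one.mp (by rw [card_compl, hunion]; rfl : (C i ∪ C j)ᶜ.card = 1)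
  have hi : C i = {x, a, b} := by rw [← insert_erase hxi, hab]
  have hj : C j = {x, c, d} := by rw [← insert_erase hxj, hcd]
  have hsix : ({x, a, b, c, d, w} : Finset (Fin 6)) = univ := by
    rw [← union_compl (C i ∪ C j), hw, hi, hj]
    ext v
    simp only [mem_union, mem_insert, mem_singleton]
    tauto
  obtain ⟨σ, rfl, rfl, rfl, rfl, rfl, rfl⟩ := exists_perm_of_eq_univ hsix
  obtain ⟨l, hl⟩ := hnc (σ 0)
  exact of_012_034 hC hint σ.symm (i := i) (j := j) (by simp [hi]) (by simp [hj])
    (by simpa using hl)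

lemma of_013_014 (hC : ∀ i, (C i).card = 3) (h2 : ∀ i j, 2 ≤ (C i ∩ C j).card)
    (τ : Perm (Fin 6)) {i j : Fin k} (hi : (C i).map τ.toEmbedding = {0, 1, 3})
    (hj : (C j).map τ.toEmbedding = {0, 1, 4}) : PathChoiceContainsJ C := by
  -- a triangle meeting `{0, 1, 3}` and `{0, 1, 4}` in edges contains `{0, 1}` or `{3, 4}`
  refine of_preferredBase hC τ [] []
    (fun t => 2 ≤ (t ∩ {0, 1, 3}).card ∧ 2 ≤ (t ∩ {0, 1, 4}).card) (by decide)
    (fun l => ⟨?_, ?_⟩) (by simp)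
  · rw [← hi, ← map_inter, card_map]; exact h2 l i
  · rw [← hj, ← map_inter, card_map]; exact h2 l j

lemma of_two_le_card_inter (hC : ∀ i, (C i).card = 3) (h2 : ∀ i j, 2 ≤ (C i ∩ C j).card)
    (hnc : ∀ x, ∃ i, x ∉ C i) : PathChoiceContainsJ C := by
  obtain ⟨i, -⟩ := hnc 0
  obtain ⟨z, hz⟩ := card_pos.mp (by rw [hC i]; omega : 0 < (C i).card)
  obtain ⟨j, hzj⟩ := hnc z
  have hij : (C i ∩ C j).card = 2 := by
    refine le_antisymm ?_ (h2 i j)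
    calc (C i ∩ C j).card ≤ ((C i).erase z).card :=
          card_le_card fun y hy => mem_erase.mpr
            ⟨fun h => hzj (h ▸ mem_of_mem_inter_right hy), mem_of_mem_inter_left hy⟩
      _ = 2 := by rw [card_erase_of_mem hz, hC i]
  obtain ⟨x, a, -, hxa⟩ := card_eq_two.mp hij
  obtain ⟨b, hb⟩ := card_eq_one.mp
    (by rw [card_sdiff_of_subset inter_subset_left, hC i, hij] : (C i \ (C i ∩ C j)).card = 1)
  obtain ⟨c, hc⟩ := card_eq_one.mp
    (by rw [card_sdiff_of_subset inter_subset_right, hC j, hij] : (C j \ (C i ∩ C j)).card = 1)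
  have hunion : (C i ∪ C j).card = 4 := by
    have := card_union_add_card_inter (C i) (C j)
    rw [hC i, hC j, hij] at this
    omega
  obtain ⟨d, w, -, hdw⟩ :=
    card_eq_two.mp (by rw [card_compl, hunion]; rfl : (C i ∪ C j)ᶜ.card = 2)
  have hi : C i = {x, a, b} := by
    rw [← union_sdiff_of_subset (inter_subset_left : C i ∩ C j ⊆ C i), hb, hxa, insert_union,
      singleton_union]
  have hj : C j = {x, a, c} := by
    rw [← union_sdiff_of_subset (inter_subset_right : C i ∩ C j ⊆ C j), hc, hxa, insert_union,
      singleton_union]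
  have hsix : ({x, a, d, b, c, w} : Finset (Fin 6)) = univ := by
    rw [← union_compl (C i ∪ C j), hdw, hi, hj]
    ext v
    simp only [mem_union, mem_insert, mem_singleton]
    tauto
  obtain ⟨σ, rfl, rfl, rfl, rfl, rfl, rfl⟩ := exists_perm_of_eq_univ hsix
  exact of_013_014 hC h2 σ.symm (i := i) (j := j) (by simp [hi]) (by simp [hj])

end PathChoiceContainsJ

/-- Given triangles `C_1,…,C_k` of `K_6`, one can choose a `C_i`-path `P_i` for each
`i` so that `M(C_1,…,C_k) ∪ P_1 ∪ ⋯ ∪ P_k` contains a subgraph isomorphic to `J`. -/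
theorem game (k : ℕ) (C : Fin k → Finset (Fin 6)) (hC : ∀ i, (C i).card = 3) :
    ∃ m : Fin k → Fin 6, (∀ i, m i ∈ C i) ∧
      ∃ φ : Fin 6 ≃ Fin 6, ∀ u v : Fin 6, JGraph.Adj u v →
        (MGraph C ⊔ ⨆ i, triPath (C i) (m i)).Adj (φ u) (φ v) := by
  show PathChoiceContainsJ C
  by_cases hdisj : ∃ i j, Disjoint (C i) (C j)
  · obtain ⟨i, j, h⟩ := hdisj
    exact .of_disjoint hC h
  have hint : ∀ i j, (C i ∩ C j).Nonempty := fun i j =>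
    nonempty_iff_ne_empty.mpr fun h => hdisj ⟨i, j, disjoint_iff_inter_eq_empty.mpr h⟩
  by_cases hcommon : ∃ x, ∀ i, x ∈ C i
  · obtain ⟨x, hx⟩ := hcommon
    exact .of_forall_mem hC hx
  push Not at hcommon
  by_cases hone : ∃ i j, (C i ∩ C j).card = 1
  · obtain ⟨i, j, h1⟩ := hone
    exact .of_card_inter_eq_one hC hint hcommon h1
  push Not at hone
  refine .of_two_le_card_inter hC (fun i j => ?_) hcommon
  have := card_pos.mpr (hint i j)
  have := hone i j
  omega
end
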